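/- arXiv:1807.06822 — 2 statements merged into one kernel-verified Lean document; each statement's English description precedes it below -/
import Mathlib

section
/- In the IDM-TC mechanism on a tree-structured economic network, the seller's revenue is at least the second-highest bid among the seller's direct neighbours (the revenue of the Vickrey auction among the seller's neighbours). -/
/-! A tree-structured economic network.  Agents `A` form a tree via `parent`
(`parent a = none` means the seller `s` is `a`'s parent).  Buyers have values,
intermediate nodes have costs. -/

/-- `Anc parent i a` : `i` lies on the unique path from the seller to `a`
(`i` is an ancestor of `a`, or `a` itself).  In a tree these are exactly the
diffusion-critical agents of `a`, so `d_i = {a | Anc parent i a}`. -/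
inductive Anc {A : Type*} (parent : A → Option A) : A → A → Prop
  | refl (a : A) : Anc parent a a
  | step {a p x : A} : parent a = some p → Anc parent x p → Anc parent x a

/-- `d_i`, the set of agents having `i` as a diffusion-critical agent. -/
def dSet {A : Type*} (parent : A → Option A) (i : A) : Set A :=
  {a | Anc parent i a}

/-- `Informed parent σ a` : under the sharing reports `σ` (intermediate node `p`
shares the sale information with `a` iff `σ p a`), agent `a` is informed of the
sale, i.e. participates in a feasible report profile. -/
inductive Informed {A : Type*} (parent : A → Option A) (σ : A → A → Prop) : A → Prop
  | root {a : A} : parent a = none → Informed parent σ a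
  | step {a p : A} : parent a = some p → Informed parent σ p → σ p a →
      Informed parent σ a

open Classical in
/-- `Wrem parent isBuyer σ β pathCost X` : the optimal social welfare `W*_{-X}`
of the report profile in which the agents of `X` are removed: the maximum, over
informed buyers `a ∉ X`, of the reported bid `β a` minus the transaction costs
`pathCost a` along the unique chain from the seller to `a` (at least `0`, since
not trading is allowed). -/
noncomputable def Wrem {A : Type*} [Fintype A] (parent : A → Option A)
    (isBuyer : A → Prop) (σ : A → A → Prop) (β : A → ℝ) (pathCost : A → ℝ)
    (X : Set A) : ℝ :=
  (insert (0 : ℝ)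
      ((Finset.univ.filter
          (fun a => isBuyer a ∧ Informed parent σ a ∧ a ∉ X)).image
        (fun a => β a - pathCost a))).max' (Finset.insert_nonempty _ _)

open Classical in
/-- The utility of agent `i` under IDM-TC, given reports `(β, σ)`, the selected
winner `w` (`none` if no trade), the successor map `nxt` along the winner's chain,
`i`'s true value `b i` and cost `c i`.  The winner `m` pays
`W*_{-m} + Σ costs = W*_{-{m}} + pathCost m`; an intermediate node `i` on the chain
pays `W*_{-d_i} - W*_{-d_{i+1}} - c i` (so her utility is
`W*_{-d_{nxt i}} - W*_{-d_i}`); everyone else pays `0`. -/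
noncomputable def utilIDMTC {A : Type*} [Fintype A] (parent : A → Option A)
    (isBuyer : A → Prop) (b : A → ℝ) (pathCost : A → ℝ)
    (β : A → ℝ) (σ : A → A → Prop) (w : Option A) (nxt : A → A) (i : A) : ℝ :=
  match w with
  | none => 0
  | some m =>
      if i = m then
        b i - (Wrem parent isBuyer σ β pathCost {m} + pathCost m)
      else if Anc parent i m then
        Wrem parent isBuyer σ β pathCost (dSet parent (nxt i))
          - Wrem parent isBuyer σ β pathCost (dSet parent i)
      else 0

/-- `w` is a valid (efficient) choice of winner for the report profile `(β, σ)`. -/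
def ValidWinner {A : Type*} (parent : A → Option A) (isBuyer : A → Prop)
    (σ : A → A → Prop) (β : A → ℝ) (pathCost : A → ℝ) (w : Option A) : Prop :=
  (w = none → ∀ a, isBuyer a → Informed parent σ a → β a - pathCost a ≤ 0) ∧
  (∀ m, w = some m → isBuyer m ∧ Informed parent σ m ∧ 0 ≤ β m - pathCost m ∧
    ∀ a, isBuyer a → Informed parent σ a → β a - pathCost a ≤ β m - pathCost m)

/-- `nxt` correctly gives, for each agent on the chain to the winner `m`, her
successor on that chain. -/
def ValidNxt {A : Type*} (parent : A → Option A) (m : A) (nxt : A → A) : Prop :=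
  ∀ j, Anc parent j m → j ≠ m → parent (nxt j) = some j ∧ Anc parent (nxt j) m

theorem test : True := trivial

open Classical in
/-- The IDM-TC payment of agent `a` (see statement 3): the winner pays
`W*_{-{m}} + pathCost m`, intermediate nodes on the chain pay
`W*_{-d_a} - W*_{-d_{a+1}} - c a`, all other agents pay `0`. -/
noncomputable def payIDMTC {A : Type*} [Fintype A] (parent : A → Option A)
    (isBuyer : A → Prop) (c : A → ℝ) (pathCost : A → ℝ)
    (β : A → ℝ) (σ : A → A → Prop) (m : A) (nxt : A → A) (a : A) : ℝ :=
  if a = m then Wrem parent isBuyer σ β pathCost {m} + pathCost m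
  else if Anc parent a m then
    Wrem parent isBuyer σ β pathCost (dSet parent a)
      - Wrem parent isBuyer σ β pathCost (dSet parent (nxt a)) - c a
  else 0

section Aux
variable {A : Type*} {parent : A → Option A} {depth : A → ℕ}

lemma anc_depth_le (hdepth : ∀ a p, parent a = some p → depth p < depth a)
    {i a : A} (h : Anc parent i a) : depth i ≤ depth a := by
  induction h with
  | refl => exact le_rfl
  | step hpar _ ih => exact ih.trans (hdepth _ _ hpar).le

lemma anc_eq_of_depth_le (hdepth : ∀ a p, parent a = some p → depth p < depth a)
    {i a : A} (h : Anc parent i a) (hle : depth a ≤ depth i) : i = a := by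
  cases h with
  | refl => rfl
  | step hpar h' =>
      have h1 := anc_depth_le hdepth h'
      have h2 := hdepth _ _ hpar
      omega

lemma anc_antisymm (hdepth : ∀ a p, parent a = some p → depth p < depth a)
    {i a : A} (h1 : Anc parent i a) (h2 : Anc parent a i) : i = a :=
  anc_eq_of_depth_le hdepth h1 (anc_depth_le hdepth h2)

lemma anc_trans' {i j a : A} (h2 : Anc parent j a) :
    Anc parent i j → Anc parent i a := by
  induction h2 with
  | refl => exact id
  | step hpar _ ih => exact fun h1 => .step hpar (ih h1)

lemma anc_trans {i j a : A} (h1 : Anc parent i j) (h2 : Anc parent j a) :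
    Anc parent i a := anc_trans' h2 h1

lemma anc_linear {x m : A} (hx : Anc parent x m) :
    ∀ y, Anc parent y m → Anc parent x y ∨ Anc parent y x := by
  induction hx with
  | refl a => intro y hy; right; exact hy
  | step hpar hxp ih =>
      intro y hy
      cases hy with
      | refl => left; exact .step hpar hxp
      | step hpar' hyp =>
          injection hpar.symm.trans hpar' with h
          subst h
          exact ih y hyp

lemma anc_root {i z : A} (h : Anc parent i z) (hz : parent z = none) : i = z := by
  cases h with
  | refl => rfl
  | step hpar _ => rw [hz] at hpar; exact absurd hpar (by simp)

lemma exists_root (hdepth : ∀ a p, parent a = some p → depth p < depth a) (a : A) :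
    ∃ r, parent r = none ∧ Anc parent r a := by
  have : ∀ n a, depth a ≤ n → ∃ r, parent r = none ∧ Anc parent r a := by
    intro n
    induction n with
    | zero =>
        intro a ha
        cases h : parent a with
        | none => exact ⟨a, h, .refl a⟩
        | some p => exact absurd (hdepth _ _ h) (by omega)
    | succ n ih =>
        intro a ha
        cases h : parent a with
        | none => exact ⟨a, h, .refl a⟩
        | some p =>
            obtain ⟨r, hr, hrp⟩ := ih p (by have := hdepth _ _ h; omega)
            exact ⟨r, hr, .step h hrp⟩
  exact this (depth a) a le_rfl

lemma anc_exists_child {i a : A} (h : Anc parent i a) (hne : i ≠ a) :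
    ∃ ch, parent ch = some i ∧ Anc parent ch a := by
  induction h with
  | refl => exact absurd rfl hne
  | step hpar h' ih =>
      rename_i a' p x
      by_cases hxp : x = p
      · subst hxp; exact ⟨a', hpar, .refl a'⟩
      · obtain ⟨ch, hch1, hch2⟩ := ih hxp
        exact ⟨ch, hch1, .step hpar hch2⟩

end Aux

/-- in IDM-TC on a tree-structured economic network with truthful
reports, the seller's revenue is at least the second-highest bid among the
seller's direct neighbours (the Vickrey revenue among `r_s`): for any two distinct
buyers `x ≠ y` that are direct neighbours of the seller (`parent = none`), the
revenue is at least `min (b x) (b y)`. -/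
theorem stmt4 {A : Type*} [Fintype A] (parent : A → Option A)
    (depth : A → ℕ) (hdepth : ∀ a p, parent a = some p → depth p < depth a)
    (isBuyer : A → Prop)
    (hleaf : ∀ a x, isBuyer a → parent x ≠ some a)
    (b c : A → ℝ) (hb : ∀ a, 0 ≤ b a) (hc : ∀ a, 0 ≤ c a)
    (pathCost : A → ℝ)
    (hpc0 : ∀ a, parent a = none → pathCost a = 0)
    (hpcs : ∀ a p, parent a = some p → pathCost a = pathCost p + c p)
    (σ : A → A → Prop) (hσ : ∀ p a, σ p a ↔ parent a = some p)
    (m : A) (hm : ValidWinner parent isBuyer σ b pathCost (some m))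
    (nxt : A → A) (hnxt : ValidNxt parent m nxt) :
    ∀ x y : A, parent x = none → parent y = none → isBuyer x → isBuyer y →
      x ≠ y →
      min (b x) (b y) ≤ ∑ a : A, payIDMTC parent isBuyer c pathCost b σ m nxt a := by
    classical
  intro x y hx hy hbx hby hxy
  have hdm : dSet parent m = ({m} : Set A) := by
    ext a
    simp only [dSet, Set.mem_setOf_eq, Set.mem_singleton_iff]
    constructor
    · intro h
      by_contra hne
      obtain ⟨ch, hch, -⟩ := anc_exists_child h (fun he => hne he.symm)
      exact hleaf m ch (hm.2 m rfl).1 hch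
    · rintro rfl; exact .refl a
  set T : A → Finset A := fun j =>
    Finset.univ.filter (fun a => Anc parent j a ∧ Anc parent a m) with hT
  have hbase : ∑ a ∈ T m, payIDMTC parent isBuyer c pathCost b σ m nxt a
      = Wrem parent isBuyer σ b pathCost (dSet parent m) + pathCost m := by
    have hTm : T m = {m} := by
      ext a
      simp only [hT, Finset.mem_filter, Finset.mem_univ, true_and, Finset.mem_singleton]
      constructor
      · rintro ⟨h1, h2⟩; exact (anc_antisymm hdepth h1 h2).symm
      · rintro rfl; exact ⟨.refl _, .refl _⟩
    rw [hTm, Finset.sum_singleton, hdm]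
    simp [payIDMTC]
  have key : ∀ n j, Anc parent j m → depth m - depth j ≤ n →
      ∑ a ∈ T j, payIDMTC parent isBuyer c pathCost b σ m nxt a
        = Wrem parent isBuyer σ b pathCost (dSet parent j) + pathCost j := by
    intro n
    induction n with
    | zero =>
        intro j hj hd
        have hle := anc_depth_le hdepth hj
        have hjm : j = m := anc_eq_of_depth_le hdepth hj (by omega)
        subst hjm; exact hbase
    | succ n ih =>
        intro j hj hd
        by_cases hjm : j = m
        · subst hjm; exact hbase
        · obtain ⟨hpar, hanc⟩ := hnxt j hj hjm
          have hdj : depth j < depth (nxt j) := hdepth _ _ hpar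
          have hdm' : depth (nxt j) ≤ depth m := anc_depth_le hdepth hanc
          have hjnotin : j ∉ T (nxt j) := by
            simp only [hT, Finset.mem_filter, Finset.mem_univ, true_and, not_and]
            intro h1 _
            exact absurd (anc_depth_le hdepth h1) (by omega)
          have hTsplit : T j = insert j (T (nxt j)) := by
            ext a
            simp only [hT, Finset.mem_filter, Finset.mem_univ, true_and, Finset.mem_insert]
            constructor
            · rintro ⟨h1, h2⟩
              by_cases haj : a = j
              · exact Or.inl haj
              · refine Or.inr ⟨?_, h2⟩
                rcases anc_linear hanc a h2 with h | h
                · exact h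
                · cases h with
                  | refl => exact .refl _
                  | step hpar' hap =>
                      injection hpar.symm.trans hpar' with he
                      subst he
                      exact absurd (anc_antisymm hdepth h1 hap).symm haj
            · rintro (rfl | ⟨h1, h2⟩)
              · exact ⟨.refl _, hj⟩
              · exact ⟨anc_trans (Anc.step hpar (.refl j)) h1, h2⟩
          rw [hTsplit, Finset.sum_insert hjnotin, ih (nxt j) hanc (by omega)]
          have hpay : payIDMTC parent isBuyer c pathCost b σ m nxt j
              = Wrem parent isBuyer σ b pathCost (dSet parent j)
                - Wrem parent isBuyer σ b pathCost (dSet parent (nxt j)) - c j := by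
            simp [payIDMTC, hjm, hj]
          rw [hpay, hpcs (nxt j) j hpar]
          ring
  obtain ⟨r, hr0, hrm⟩ := exists_root hdepth m
  have hsum : ∑ a ∈ T r, payIDMTC parent isBuyer c pathCost b σ m nxt a
      = ∑ a : A, payIDMTC parent isBuyer c pathCost b σ m nxt a := by
    refine Finset.sum_filter_of_ne ?_
    intro a _ hne
    by_cases ham : a = m
    · subst ham; exact ⟨hrm, .refl a⟩
    · by_cases hanc : Anc parent a m
      · refine ⟨?_, hanc⟩
        rcases anc_linear hrm a hanc with h | h
        · exact h
        · rw [anc_root h hr0]; exact .refl r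
      · exact absurd (show payIDMTC parent isBuyer c pathCost b σ m nxt a = 0 by simp [payIDMTC, ham, hanc]) hne
  rw [← hsum, key (depth m) r hrm (by omega), hpc0 r hr0, add_zero]
  have hfin : ∀ z, parent z = none → isBuyer z → z ≠ r →
      b z ≤ Wrem parent isBuyer σ b pathCost (dSet parent r) := by
    intro z hz hbz hzr
    have hz0 : b z = b z - pathCost z := by rw [hpc0 z hz, sub_zero]
    rw [Wrem, hz0]
    refine Finset.le_max' _ (b z - pathCost z) ?_
    simp only [Finset.mem_insert, Finset.mem_image, Finset.mem_filter, Finset.mem_univ, true_and]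
    exact Or.inr ⟨z, ⟨hbz, .root hz, fun hmem => hzr (anc_root hmem hz).symm⟩, rfl⟩
  by_cases hxr : x = r
  · exact le_trans (min_le_right _ _) (hfin y hy hby (fun h => hxy (hxr.trans h.symm)))
  · exact le_trans (min_le_left _ _) (hfin x hx hbx hxr)
end

section
/- IDM-TC on a tree-structured network is individually rational and incentive compatible: every buyer's utility is maximized and nonnegative when bidding her true valuation, and every intermediate node's utility is maximized and nonnegative when sharing the sale information with all her neighbours (i.e., reporting her full neighbour set). -/
section Aux

variable {A : Type*}

lemma anc_up' {parent : A → Option A} {x a : A} (h : Anc parent x a) :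
    ∀ {p}, parent x = some p → Anc parent p a := by
  induction h with
  | refl a => intro p hx; exact Anc.step hx (Anc.refl p)
  | step ha _ ih => intro p hx; exact Anc.step ha (ih hx)

lemma anc_up {parent : A → Option A} {x p a : A} (hx : parent x = some p)
    (h : Anc parent x a) : Anc parent p a := anc_up' h hx

lemma anc_depth {parent : A → Option A} {depth : A → ℕ}
    (hd : ∀ a p, parent a = some p → depth p < depth a)
    {x a : A} (h : Anc parent x a) : depth x ≤ depth a := by
  induction h with
  | refl a => exact le_rfl
  | step ha _ ih => exact le_trans ih (le_of_lt (hd _ _ ha))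

lemma anc_inv {parent : A → Option A} {x a p : A} (h : Anc parent x a)
    (hp : parent a = some p) : x = a ∨ Anc parent x p := by
  cases h with
  | refl => exact Or.inl rfl
  | step ha hq =>
      right
      injection (hp.symm.trans ha) with h'
      exact h' ▸ hq

lemma anc_total {parent : A → Option A} {x a : A} (hx : Anc parent x a) :
    ∀ {y}, Anc parent y a → Anc parent x y ∨ Anc parent y x := by
  induction hx with
  | refl a => intro y hy; exact Or.inr hy
  | step ha hxp ih =>
      intro y hy
      rcases anc_inv hy ha with rfl | hyp
      · exact Or.inl (Anc.step ha hxp)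
      · exact ih hyp

lemma sibling_disjoint {parent : A → Option A} {depth : A → ℕ}
    (hd : ∀ a p, parent a = some p → depth p < depth a)
    {i u v a : A} (hu : parent u = some i) (hv : parent v = some i)
    (huv : u ≠ v) (hua : Anc parent u a) (hva : Anc parent v a) : False := by
  have key : ∀ {u v : A}, parent u = some i → parent v = some i → u ≠ v →
      Anc parent u v → False := by
    intro u v hu hv huv h
    rcases anc_inv h hv with rfl | hui
    · exact huv rfl
    · exact absurd (anc_depth hd hui) (not_le.mpr (hd u i hu))
  rcases anc_total hua hva with h | h
  · exact key hu hv huv h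
  · exact key hv hu (Ne.symm huv) h

lemma buyer_anc' {parent : A → Option A} {isBuyer : A → Prop}
    (hleaf : ∀ a x, isBuyer a → parent x ≠ some a)
    {x a : A} (h : Anc parent x a) : isBuyer x → x = a := by
  induction h with
  | refl a => exact fun _ => rfl
  | step ha _ ih =>
      intro hx
      have h' := ih hx
      rw [← h'] at ha
      exact absurd ha (hleaf _ _ hx)

lemma buyer_anc {parent : A → Option A} {isBuyer : A → Prop}
    (hleaf : ∀ a x, isBuyer a → parent x ≠ some a)
    {x a : A} (hx : isBuyer x) (h : Anc parent x a) : x = a :=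
  buyer_anc' hleaf h hx

lemma informed_TD {parent : A → Option A} {σ σT σD : A → A → Prop} {i : A}
    (hT1 : ∀ j, j ≠ i → σT j = σ j) (hT2 : ∀ a, σT i a ↔ parent a = some i)
    (hD1 : ∀ j, j ≠ i → σD j = σ j) (hD2 : ∀ a, σD i a → parent a = some i)
    {a : A} (h : Informed parent σD a) : Informed parent σT a := by
  induction h with
  | root h => exact Informed.root h
  | @step a p h1 _ h3 ih =>
      refine Informed.step h1 ih ?_
      by_cases hpi : p = i
      · subst hpi
        exact (hT2 a).mpr (hD2 a h3)
      · have hσ : σ p a := by rw [← hD1 p hpi]; exact h3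
        rw [hT1 p hpi]; exact hσ

lemma informed_DT {parent : A → Option A} {σ σT σD : A → A → Prop} {i : A}
    (hT1 : ∀ j, j ≠ i → σT j = σ j) (hT2 : ∀ a, σT i a ↔ parent a = some i)
    (hD1 : ∀ j, j ≠ i → σD j = σ j) (hD2 : ∀ a, σD i a → parent a = some i)
    {a : A} (h : Informed parent σT a) :
    ¬ Anc parent i a → Informed parent σD a := by
  induction h with
  | root h => exact fun _ => Informed.root h
  | @step a p h1 _ h3 ih =>
      intro hna
      have hnp : ¬ Anc parent i p := fun h => hna (Anc.step h1 h)
      have hpi : p ≠ i := by rintro rfl; exact hnp (Anc.refl p)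
      refine Informed.step h1 (ih hnp) ?_
      have hσ : σ p a := by rw [← hT1 p hpi]; exact h3
      rw [hD1 p hpi]; exact hσ

variable [Fintype A]

lemma Wrem_nonneg (parent : A → Option A) (isBuyer : A → Prop)
    (σ : A → A → Prop) (β pathCost : A → ℝ) (X : Set A) :
    0 ≤ Wrem parent isBuyer σ β pathCost X := by
  unfold Wrem
  exact Finset.le_max' _ 0 (Finset.mem_insert_self _ _)

lemma le_Wrem {parent : A → Option A} {isBuyer : A → Prop}
    {σ : A → A → Prop} {β pathCost : A → ℝ} {X : Set A} {a : A}
    (hb : isBuyer a) (hi : Informed parent σ a) (hx : a ∉ X) :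
    β a - pathCost a ≤ Wrem parent isBuyer σ β pathCost X := by
  unfold Wrem
  classical
  refine Finset.le_max' _ _ (Finset.mem_insert_of_mem ?_)
  refine Finset.mem_image_of_mem _ ?_
  simp only [Finset.mem_filter, Finset.mem_univ, true_and]
  exact ⟨hb, hi, hx⟩

lemma Wrem_le {parent : A → Option A} {isBuyer : A → Prop}
    {σ : A → A → Prop} {β pathCost : A → ℝ} {X : Set A} {M : ℝ}
    (h0 : 0 ≤ M)
    (h : ∀ a, isBuyer a → Informed parent σ a → a ∉ X → β a - pathCost a ≤ M) :
    Wrem parent isBuyer σ β pathCost X ≤ M := by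
  unfold Wrem
  classical
  apply Finset.max'_le
  intro y hy
  rcases Finset.mem_insert.1 hy with rfl | hy
  · exact h0
  · obtain ⟨a, ha, rfl⟩ := Finset.mem_image.1 hy
    simp only [Finset.mem_filter, Finset.mem_univ, true_and] at ha
    exact h a ha.1 ha.2.1 ha.2.2

lemma Wrem_anti {parent : A → Option A} {isBuyer : A → Prop}
    {σ : A → A → Prop} {β pathCost : A → ℝ} {X Y : Set A} (hXY : X ⊆ Y) :
    Wrem parent isBuyer σ β pathCost Y ≤ Wrem parent isBuyer σ β pathCost X :=
  Wrem_le (Wrem_nonneg _ _ _ _ _ _)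
    (fun a hb hi hy => le_Wrem hb hi (fun hx => hy (hXY hx)))

end Aux
/-- IDM-TC on a tree-structured economic network is individually
rational and incentive compatible: every buyer's utility is maximized and
nonnegative when bidding her true valuation `b i`, and every intermediate node's
utility is maximized and nonnegative when sharing the sale information with all
her neighbours (children).  Both claims hold for arbitrary fixed reports of the
other agents and for any valid (efficient, tie-broken) outcomes. -/
theorem stmt5 {A : Type*} [Fintype A] (parent : A → Option A)
    (depth : A → ℕ) (hdepth : ∀ a p, parent a = some p → depth p < depth a)
    (isBuyer : A → Prop)
    (hleaf : ∀ a x, isBuyer a → parent x ≠ some a)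
    (b c : A → ℝ) (hb : ∀ a, 0 ≤ b a) (hc : ∀ a, 0 ≤ c a)
    (pathCost : A → ℝ)
    (hpc0 : ∀ a, parent a = none → pathCost a = 0)
    (hpcs : ∀ a p, parent a = some p → pathCost a = pathCost p + c p)
    (i : A) :
    -- (1) buyer `i`: truthful bidding is dominant and individually rational
    (isBuyer i →
      ∀ (β β' : A → ℝ) (σ : A → A → Prop),
        β i = b i → (∀ j, j ≠ i → β' j = β j) →
        ∀ (w w' : Option A) (nxt nxt' : A → A),
          ValidWinner parent isBuyer σ β pathCost w →
          (∀ m, w = some m → ValidNxt parent m nxt) →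
          ValidWinner parent isBuyer σ β' pathCost w' →
          (∀ m, w' = some m → ValidNxt parent m nxt') →
          0 ≤ utilIDMTC parent isBuyer b pathCost β σ w nxt i ∧
          utilIDMTC parent isBuyer b pathCost β' σ w' nxt' i ≤
            utilIDMTC parent isBuyer b pathCost β σ w nxt i) ∧
    -- (2) intermediate node `i`: sharing with all neighbours is dominant and IR
    (¬ isBuyer i →
      ∀ (β : A → ℝ) (σ σT σD : A → A → Prop),
        (∀ j, j ≠ i → σT j = σ j) → (∀ a, σT i a ↔ parent a = some i) →
        (∀ j, j ≠ i → σD j = σ j) → (∀ a, σD i a → parent a = some i) →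
        ∀ (w w' : Option A) (nxt nxt' : A → A),
          ValidWinner parent isBuyer σT β pathCost w →
          (∀ m, w = some m → ValidNxt parent m nxt) →
          ValidWinner parent isBuyer σD β pathCost w' →
          (∀ m, w' = some m → ValidNxt parent m nxt') →
          0 ≤ utilIDMTC parent isBuyer b pathCost β σT w nxt i ∧
          utilIDMTC parent isBuyer b pathCost β σD w' nxt' i ≤
            utilIDMTC parent isBuyer b pathCost β σT w nxt i) := by
  constructor
  · -- Part 1 : buyer
    intro hbuy β β' σ hβi hβ' w w' nxt nxt' hw _ hw' _
    have hIR : 0 ≤ utilIDMTC parent isBuyer b pathCost β σ w nxt i := by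
      cases w with
      | none => simp [utilIDMTC]
      | some m =>
        obtain ⟨hmB, hmI, hm0, hmMax⟩ := hw.2 m rfl
        by_cases him : i = m
        · subst him
          simp only [utilIDMTC]
          rw [if_pos trivial]
          have hW : Wrem parent isBuyer σ β pathCost {i} ≤ β i - pathCost i :=
            Wrem_le hm0 (fun a ha hia _ => hmMax a ha hia)
          rw [← hβi]; linarith
        · have hnanc : ¬ Anc parent i m := fun h => him (buyer_anc hleaf hbuy h)
          simp only [utilIDMTC]
          rw [if_neg him, if_neg hnanc]
    refine ⟨hIR, ?_⟩
    cases w' with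
    | none => simpa [utilIDMTC] using hIR
    | some m' =>
      obtain ⟨hm'B, hm'I, _, _⟩ := hw'.2 m' rfl
      by_cases him' : i = m'
      · subst him'
        simp only [utilIDMTC]
        rw [if_pos trivial]
        have hWeq : Wrem parent isBuyer σ β' pathCost {i}
            = Wrem parent isBuyer σ β pathCost {i} := by
          apply le_antisymm
          · refine Wrem_le (Wrem_nonneg _ _ _ _ _ _) (fun a ha hia hx => ?_)
            have hax : a ≠ i := hx
            rw [hβ' a hax]; exact le_Wrem ha hia hx
          · refine Wrem_le (Wrem_nonneg _ _ _ _ _ _) (fun a ha hia hx => ?_)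
            have hax : a ≠ i := hx
            rw [← hβ' a hax]; exact le_Wrem ha hia hx
        rw [hWeq, ← hβi]
        cases w with
        | none =>
          have h0 : β i - pathCost i ≤ 0 := hw.1 rfl i hbuy hm'I
          have hW := Wrem_nonneg parent isBuyer σ β pathCost {i}
          simp only [utilIDMTC]
          linarith
        | some m =>
          obtain ⟨hmB, hmI, hm0, hmMax⟩ := hw.2 m rfl
          by_cases him : i = m
          · subst him
            simp only [utilIDMTC]
            rw [if_pos trivial]
          · have hnanc : ¬ Anc parent i m := fun h => him (buyer_anc hleaf hbuy h)
            simp only [utilIDMTC]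
            rw [if_neg him, if_neg hnanc]
            have h1 : β i - pathCost i ≤ β m - pathCost m := hmMax i hbuy hm'I
            have h2 : β m - pathCost m ≤ Wrem parent isBuyer σ β pathCost {i} :=
              le_Wrem hmB hmI (by simpa using fun h : m = i => him h.symm)
            linarith
      · have hnanc : ¬ Anc parent i m' := fun h => him' (buyer_anc hleaf hbuy h)
        have h0 : utilIDMTC parent isBuyer b pathCost β' σ (some m') nxt' i = 0 := by
          simp only [utilIDMTC]; rw [if_neg him', if_neg hnanc]
        rw [h0]; exact hIR
  · -- Part 2 : intermediate node
    intro hnb β σ σT σD hT1 hT2 hD1 hD2 w w' nxt nxt' hw hnxt hw' hnxt'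
    have hIR : 0 ≤ utilIDMTC parent isBuyer b pathCost β σT w nxt i := by
      cases w with
      | none => simp [utilIDMTC]
      | some m =>
        obtain ⟨hmB, _, _, _⟩ := hw.2 m rfl
        have him : i ≠ m := fun h => hnb (h ▸ hmB)
        by_cases hanc : Anc parent i m
        · obtain ⟨hpn, _⟩ := hnxt m rfl i hanc him
          simp only [utilIDMTC]
          rw [if_neg him, if_pos hanc]
          have hsub : dSet parent (nxt i) ⊆ dSet parent i :=
            fun a ha => anc_up hpn ha
          have := Wrem_anti (parent := parent) (isBuyer := isBuyer)
            (σ := σT) (β := β) (pathCost := pathCost) hsub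
          linarith
        · simp only [utilIDMTC]
          rw [if_neg him, if_neg hanc]
    refine ⟨hIR, ?_⟩
    cases w' with
    | none => simpa [utilIDMTC] using hIR
    | some m' =>
      obtain ⟨hm'B, hm'I, hm'0, hm'Max⟩ := hw'.2 m' rfl
      have him' : i ≠ m' := fun h => hnb (h ▸ hm'B)
      by_cases hanc' : Anc parent i m'
      · obtain ⟨hpn', hancn'⟩ := hnxt' m' rfl i hanc' him'
        simp only [utilIDMTC]
        rw [if_neg him', if_pos hanc']
        have hDi : Wrem parent isBuyer σD β pathCost (dSet parent i)
            = Wrem parent isBuyer σT β pathCost (dSet parent i) := by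
          apply le_antisymm
          · refine Wrem_le (Wrem_nonneg _ _ _ _ _ _) (fun a ha hia hx => ?_)
            exact le_Wrem ha (informed_TD hT1 hT2 hD1 hD2 hia) hx
          · refine Wrem_le (Wrem_nonneg _ _ _ _ _ _) (fun a ha hia hx => ?_)
            exact le_Wrem ha (informed_DT hT1 hT2 hD1 hD2 hia hx) hx
        cases w with
        | none =>
          -- truthful utility is 0; show deviating utility ≤ 0
          simp only [utilIDMTC]
          have hm'0 : β m' - pathCost m' ≤ 0 :=
            hw.1 rfl m' hm'B (informed_TD hT1 hT2 hD1 hD2 hm'I)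
          have hkey : Wrem parent isBuyer σD β pathCost (dSet parent (nxt' i))
              ≤ Wrem parent isBuyer σD β pathCost (dSet parent i) := by
            refine Wrem_le (Wrem_nonneg _ _ _ _ _ _) (fun a ha hia hx => ?_)
            by_cases hai : a ∈ dSet parent i
            · calc β a - pathCost a ≤ β m' - pathCost m' := hm'Max a ha hia
                _ ≤ 0 := hm'0
                _ ≤ _ := Wrem_nonneg _ _ _ _ _ _
            · exact le_Wrem ha hia hai
          linarith
        | some m =>
          obtain ⟨hmB, hmI, hm0, hmMax⟩ := hw.2 m rfl
          have him : i ≠ m := fun h => hnb (h ▸ hmB)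
          by_cases hanc : Anc parent i m
          · -- both chains pass through i
            obtain ⟨hpn, hancn⟩ := hnxt m rfl i hanc him
            simp only [utilIDMTC]
            rw [if_neg him, if_pos hanc, hDi]
            have hkey : Wrem parent isBuyer σD β pathCost (dSet parent (nxt' i))
                ≤ Wrem parent isBuyer σT β pathCost (dSet parent (nxt i)) := by
              refine Wrem_le (Wrem_nonneg _ _ _ _ _ _) (fun a ha hia hx => ?_)
              by_cases hai : a ∈ dSet parent (nxt i)
              · -- then nxt i ≠ nxt' i and m' lies outside dSet (nxt i)
                have hne : nxt i ≠ nxt' i := by rintro h; rw [h] at hai; exact hx hai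
                have hm'out : m' ∉ dSet parent (nxt i) := fun hmem =>
                  sibling_disjoint hdepth hpn hpn' hne hmem hancn'
                calc β a - pathCost a ≤ β m' - pathCost m' := hm'Max a ha hia
                  _ ≤ _ := le_Wrem hm'B (informed_TD hT1 hT2 hD1 hD2 hm'I) hm'out
              · exact le_Wrem ha (informed_TD hT1 hT2 hD1 hD2 hia) hai
            linarith
          · -- truthful utility is 0
            simp only [utilIDMTC]
            rw [if_neg him, if_neg hanc]
            have hkey : Wrem parent isBuyer σD β pathCost (dSet parent (nxt' i))
                ≤ Wrem parent isBuyer σD β pathCost (dSet parent i) := by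
              refine Wrem_le (Wrem_nonneg _ _ _ _ _ _) (fun a ha hia hx => ?_)
              by_cases hai : a ∈ dSet parent i
              · have hmout : m ∉ dSet parent i := hanc
                calc β a - pathCost a ≤ β m' - pathCost m' := hm'Max a ha hia
                  _ ≤ β m - pathCost m :=
                      hmMax m' hm'B (informed_TD hT1 hT2 hD1 hD2 hm'I)
                  _ ≤ Wrem parent isBuyer σT β pathCost (dSet parent i) :=
                      le_Wrem hmB hmI hmout
                  _ = _ := hDi.symm
              · exact le_Wrem ha hia hai
            linarith
      · have h0 : utilIDMTC parent isBuyer b pathCost β σD (some m') nxt' i = 0 := by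
          simp only [utilIDMTC]; rw [if_neg him', if_neg hanc']
        rw [h0]; exact hIR
end
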